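/- One has the inclusions CP_Q~ ⊆ NN_Q~ ⊆ 4·(CP_Q~ − CP_Q~), where CP_Q~ − CP_Q~ = {a − b : a, b ∈ CP_Q~} is the difference body of the section CP_Q~. -/

import Mathlib

open MeasureTheory Finset

noncomputable section

/-- The space `Q` of even quartics, represented by symmetric coefficient matrices
`a : Fin n → Fin n → ℝ` (the quartic being `∑ i j, a i j * x i ^ 2 * x j ^ 2`). -/
def symSub (n : ℕ) : Submodule ℝ (Fin n → Fin n → ℝ) where
  carrier := {a | ∀ i j, a i j = a j i}
  add_mem' := by
    intro a b ha hb i j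
    simp only [Pi.add_apply, ha i j, hb i j]
  zero_mem' := by intro i j; rfl
  smul_mem' := by
    intro c a ha i j
    simp only [Pi.smul_apply, smul_eq_mul, ha i j]

/-- The even quartic form corresponding to a symmetric coefficient matrix. -/
def qfun {n : ℕ} (a : symSub n) (x : EuclideanSpace ℝ (Fin n)) : ℝ :=
  ∑ i, ∑ j, a.1 i j * (x i)^2 * (x j)^2

/-- The element of `Q` corresponding to `r(x) = (x_1^2 + ... + x_n^2)^2`. -/
def rQ (n : ℕ) : symSub n := ⟨fun _ _ => 1, fun _ _ => rfl⟩

/-- The section `K~ = {f ∈ M : f + r ∈ K}` of a cone `K ⊆ Q`. -/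
def sect {n : ℕ} (σ : Measure (EuclideanSpace ℝ (Fin n))) (K : Set (symSub n)) :
    Set (symSub n) :=
  {a | (∫ x, qfun a x ∂σ) = 0 ∧ a + rQ n ∈ K}

/-- The volume radius of a subset of `M`, computed through a linear isometry `ψ`
of `ℝ^(dim M)` (with Lebesgue measure) onto `M`. -/
def vrad {n d : ℕ} (ψ : EuclideanSpace ℝ (Fin d) →ₗ[ℝ] symSub n)
    (C : Set (symSub n)) : ℝ :=
  ((volume (⇑ψ ⁻¹' C)).toReal /
    (volume (Metric.closedBall (0 : EuclideanSpace ℝ (Fin d)) 1)).toReal) ^ ((1:ℝ)/(d:ℝ))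

/-- `NN_Q`: even quartics with nonnegative coefficients. -/
def NNQ (n : ℕ) : Set (symSub n) :=
  {a | ∀ i j, 0 ≤ a.1 i j}

/-- `CP_Q`: sums of squares of quadratic forms in `x_1^2, …, x_n^2` having
nonnegative coefficients. -/
def CPQ (n : ℕ) : Set (symSub n) :=
  {a | ∃ (k : ℕ) (c : Fin k → Fin n → ℝ), (∀ i j, 0 ≤ c i j) ∧
    ∀ x : EuclideanSpace ℝ (Fin n), qfun a x = ∑ i, (∑ j, c i j * (x j)^2)^2}

/-!
A quartic in `x₁², …, xₙ²` determines its symmetric coefficient matrix, so an element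
`∑ₜ (∑ⱼ cₜⱼ xⱼ²)²` of `CP_Q` has the coefficients `∑ₜ cₜᵢ cₜⱼ ≥ 0`; this gives the first inclusion.

For the second, let `h ∈ NN_Q~`, so that `m = h + r` has nonnegative coefficients and `∫ m = 1`,
and let `D` be the diagonal matrix of the row sums of `m`. Both `D` and
`m + D = ∑ₖₗ (mₖₗ / 2) (eₖ + eₗ)(eₖ + eₗ)ᵀ` lie in `CP_Q`. With `X = ∫ D` we have `h = 4 (a - b)`
for `a = (m + D)/4 - (1 + X)/4 · r` and `b = D/4 - X/4 · r`, both of mean zero, and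
`a + r = (m + D)/4 + (3 - X)/4 · r`, `b + r = D/4 + (4 - X)/4 · r` lie in `CP_Q` once `X ≤ 3`.
That bound follows from the moment relation `∫ xᵢ⁴ + ∫ xⱼ⁴ = 6 ∫ xᵢ² xⱼ²`, which is the invariance
of `σ` under the orthogonal map `(xᵢ, xⱼ) ↦ ((xᵢ + xⱼ)/√2, (xᵢ - xⱼ)/√2)`.
-/

section

variable {n : ℕ}

def qfunLinear (x : EuclideanSpace ℝ (Fin n)) : symSub n →ₗ[ℝ] ℝ where
  toFun a := qfun a x
  map_add' a b := by
    simp only [qfun, Submodule.coe_add, Pi.add_apply, add_mul, sum_add_distrib]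
  map_smul' t a := by
    simp only [qfun, Submodule.coe_smul, Pi.smul_apply, smul_eq_mul, mul_sum, mul_assoc,
      RingHom.id_apply]

@[simp]
lemma qfunLinear_apply (x : EuclideanSpace ℝ (Fin n)) (a : symSub n) :
    qfunLinear x a = qfun a x := rfl

lemma qfun_single (a : symSub n) (i : Fin n) :
    qfun a (EuclideanSpace.single i 1) = a.1 i i := by
  simp [qfun]

lemma qfun_single_add_single (a : symSub n) {i j : Fin n} (hij : i ≠ j) :
    qfun a (EuclideanSpace.single i 1 + EuclideanSpace.single j 1) =
      a.1 i i + 2 * a.1 i j + a.1 j j := by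
  have hx : ∀ k, ((EuclideanSpace.single i (1:ℝ) + EuclideanSpace.single j 1 :
      EuclideanSpace ℝ (Fin n)) k) ^ 2 = (if k = i then 1 else 0) + (if k = j then 1 else 0) := by
    intro k
    by_cases hki : k = i <;> by_cases hkj : k = j <;> simp_all
  simp only [qfun, hx]
  simp only [mul_add, mul_ite, mul_one, mul_zero, sum_add_distrib, sum_ite_eq', mem_univ,
    ↓reduceIte, a.2 j i]
  ring

lemma qfun_injective : Function.Injective (qfun (n := n)) := by
  intro a b hab
  have hq : ∀ x, qfun (a - b) x = 0 := fun x => by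
    rw [← qfunLinear_apply, map_sub, qfunLinear_apply, qfunLinear_apply, sub_eq_zero]
    exact congrFun hab x
  rw [← sub_eq_zero]
  ext i j
  have hii := qfun_single (a - b) i
  have hjj := qfun_single (a - b) j
  rw [hq] at hii hjj
  rcases eq_or_ne i j with rfl | hij
  · exact hii.symm
  · have hp := qfun_single_add_single (a - b) hij
    rw [hq] at hp
    simp only [Submodule.coe_zero, Pi.zero_apply]
    linarith

def selfOuter (v : Fin n → ℝ) : symSub n := ⟨fun i j => v i * v j, fun _ _ => mul_comm _ _⟩

lemma qfun_selfOuter (v : Fin n → ℝ) (x : EuclideanSpace ℝ (Fin n)) :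
    qfun (selfOuter v) x = (∑ j, v j * x j ^ 2) ^ 2 := by
  rw [sq, sum_mul_sum]
  exact sum_congr rfl fun i _ => sum_congr rfl fun j _ => by simp only [selfOuter]; ring

lemma rQ_eq_selfOuter_one : rQ n = selfOuter 1 := by
  ext i j; simp [rQ, selfOuter]

lemma qfun_rQ (x : EuclideanSpace ℝ (Fin n)) : qfun (rQ n) x = ‖x‖ ^ 4 := by
  rw [rQ_eq_selfOuter_one, qfun_selfOuter, EuclideanSpace.norm_eq, show 4 = 2 * 2 by rfl, pow_mul,
    Real.sq_sqrt (by positivity)]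
  simp

def diagSym (s : Fin n → ℝ) : symSub n :=
  ⟨fun i j => if i = j then s i else 0, fun i j => by
    rcases eq_or_ne i j with rfl | hij
    · rfl
    · simp [hij, hij.symm]⟩

def rowSumDiag (a : symSub n) : symSub n := diagSym fun i => ∑ j, a.1 i j

def cpCone (n : ℕ) : PointedCone ℝ (symSub n) where
  carrier := CPQ n
  zero_mem' := ⟨0, Fin.elim0, fun i => i.elim0, fun x => by simp [qfun]⟩
  add_mem' := by
    rintro a b ⟨k₁, c₁, hc₁, ha⟩ ⟨k₂, c₂, hc₂, hb⟩
    refine ⟨k₁ + k₂, Fin.append c₁ c₂, Fin.addCases (by simpa) (by simpa), fun x => ?_⟩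
    rw [← qfunLinear_apply, map_add, qfunLinear_apply, qfunLinear_apply, ha, hb,
      Fin.sum_univ_add]
    simp
  smul_mem' := by
    rintro ⟨t, ht⟩ a ⟨k, c, hc, ha⟩
    refine ⟨k, fun i j => √t * c i j, fun i j => mul_nonneg (Real.sqrt_nonneg t) (hc i j),
      fun x => ?_⟩
    rw [Nonneg.mk_smul, ← qfunLinear_apply, map_smul, qfunLinear_apply, ha, smul_eq_mul,
      mul_sum]
    simp only [mul_assoc, ← mul_sum, mul_pow, Real.sq_sqrt ht]

lemma mem_cpCone {a : symSub n} : a ∈ cpCone n ↔ a ∈ CPQ n := by rfl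

lemma selfOuter_mem_cpCone {v : Fin n → ℝ} (hv : 0 ≤ v) : selfOuter v ∈ cpCone n :=
  mem_cpCone.2 ⟨1, fun _ => v, fun _ => hv, fun x => by simp [qfun_selfOuter]⟩

lemma rQ_mem_cpCone : rQ n ∈ cpCone n :=
  rQ_eq_selfOuter_one ▸ selfOuter_mem_cpCone zero_le_one

lemma diagSym_eq_sum (s : Fin n → ℝ) :
    diagSym s = ∑ k, s k • selfOuter (Pi.single k 1) := by
  ext i j
  rcases eq_or_ne i j with rfl | hij <;> simp [diagSym, selfOuter, Pi.single_apply, *]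

lemma diagSym_mem_cpCone {s : Fin n → ℝ} (hs : ∀ i, 0 ≤ s i) : diagSym s ∈ cpCone n := by
  rw [diagSym_eq_sum]
  exact sum_mem fun k _ => (cpCone n).smul_mem (hs k)
    (selfOuter_mem_cpCone (Pi.single_nonneg.2 zero_le_one))

lemma add_rowSumDiag_eq_sum {a : symSub n} :
    a + rowSumDiag a = ∑ k, ∑ l, (a.1 k l / 2) • selfOuter (Pi.single k 1 + Pi.single l 1) := by
  ext i j
  rcases eq_or_ne i j with rfl | hij
  · have hcol : ∑ k, a.1 k i = ∑ k, a.1 i k := sum_congr rfl fun k _ => a.2 k i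
    simp only [rowSumDiag, diagSym, Submodule.coe_add, Pi.add_apply, ↓reduceIte, selfOuter,
      Pi.single_apply, mul_add, mul_ite, mul_one, mul_zero, SetLike.mk_smul_mk,
      AddSubmonoidClass.coe_finsetSum, Finset.sum_apply, Pi.smul_apply, smul_eq_mul,
      sum_add_distrib, sum_ite_irrel, ← sum_div, sum_const_zero, sum_ite_eq, mem_univ, hcol]
    ring
  · simp [rowSumDiag, diagSym, selfOuter, Pi.single_apply, mul_add, sum_add_distrib, hij,
      a.2 j i]

lemma add_rowSumDiag_mem_cpCone {a : symSub n} (ha : a ∈ NNQ n) :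
    a + rowSumDiag a ∈ cpCone n := by
  rw [add_rowSumDiag_eq_sum]
  have hsingle : ∀ k : Fin n, (0 : Fin n → ℝ) ≤ Pi.single k 1 := fun k =>
    Pi.single_nonneg.2 zero_le_one
  exact sum_mem fun k _ => sum_mem fun l _ =>
    (cpCone n).smul_mem (div_nonneg (ha k l) zero_le_two)
      (selfOuter_mem_cpCone (add_nonneg (hsingle k) (hsingle l)))

lemma CPQ_subset_NNQ : CPQ n ⊆ NNQ n := by
  rintro a ⟨k, c, hc, ha⟩ i j
  have hsum : a = ∑ t, selfOuter (c t) := qfun_injective <| funext fun x => by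
    rw [ha, ← qfunLinear_apply, map_sum]
    simp [qfun_selfOuter]
  rw [hsum]
  simp only [selfOuter, Submodule.coe_sum, Finset.sum_apply]
  exact sum_nonneg fun t _ => mul_nonneg (hc t i) (hc t j)

def hadamardIsometry {i j : Fin n} (hij : i ≠ j) :
    EuclideanSpace ℝ (Fin n) ≃ₗᵢ[ℝ] EuclideanSpace ℝ (Fin n) :=
  LinearIsometry.toLinearIsometryEquiv
    { toFun := fun x => WithLp.toLp 2 fun k =>
        if k = i then (x i + x j) / √2 else if k = j then (x i - x j) / √2 else x k
      map_add' := fun x y => by ext k; simp only [PiLp.add_apply]; split_ifs <;> ring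
      map_smul' := fun t x => by
        ext k; simp only [PiLp.smul_apply, smul_eq_mul, RingHom.id_apply]; split_ifs <;> ring
      norm_map' := fun x => by
        simp only [LinearMap.coe_mk, AddHom.coe_mk, EuclideanSpace.norm_eq, Real.norm_eq_abs,
          sq_abs]
        congr 1
        rw [← sub_eq_zero, ← sum_sub_distrib, Fintype.sum_eq_add i j hij fun k hk => by
          simp [hk.1, hk.2]]
        have h2 : √2 ^ 2 = 2 := Real.sq_sqrt zero_le_two
        simp only [if_pos, if_neg hij.symm, div_pow, h2]
        ring }
    rfl

lemma hadamardIsometry_apply_left {i j : Fin n} (hij : i ≠ j) (x : EuclideanSpace ℝ (Fin n)) :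
    hadamardIsometry hij x i = (x i + x j) / √2 := if_pos rfl

lemma hadamardIsometry_apply_right {i j : Fin n} (hij : i ≠ j) (x : EuclideanSpace ℝ (Fin n)) :
    hadamardIsometry hij x j = (x i - x j) / √2 := by
  simp [hadamardIsometry, hij.symm]

lemma sum_rowSum_mul_diag_le {m J : Fin n → Fin n → ℝ} (hm : ∀ i j, m i j = m j i)
    (hm₀ : ∀ i j, 0 ≤ m i j) (hJ : ∀ i j, J i i + J j j ≤ 6 * J i j) :
    ∑ i, (∑ j, m i j) * J i i ≤ 3 * ∑ i, ∑ j, m i j * J i j := by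
  have hswap : ∑ i, ∑ j, m i j * J j j = ∑ i, ∑ j, m i j * J i i := by
    rw [sum_comm]
    simp only [hm]
  calc ∑ i, (∑ j, m i j) * J i i = (∑ i, ∑ j, m i j * (J i i + J j j)) / 2 := by
        simp only [mul_add, sum_add_distrib, hswap, sum_mul]
        ring
    _ ≤ (∑ i, ∑ j, m i j * (6 * J i j)) / 2 := by
        gcongr with i _ j _
        · exact hm₀ i j
        · exact hJ i j
    _ = 3 * ∑ i, ∑ j, m i j * J i j := by
        simp only [mul_sum, sum_div]
        exact sum_congr rfl fun i _ => sum_congr rfl fun j _ => by ring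

lemma integrable_of_ae_mem_sphere {E : Type*} [NormedAddCommGroup E] [ProperSpace E]
    [MeasurableSpace E] [BorelSpace E] {σ : Measure E} [IsFiniteMeasure σ]
    (hσ : ∀ᵐ x ∂σ, x ∈ Metric.sphere (0 : E) 1) {f : E → ℝ} (hf : Continuous f) :
    Integrable f σ := by
  rw [← Measure.restrict_eq_self_of_ae_mem hσ]
  exact hf.continuousOn.integrableOn_compact (isCompact_sphere 0 1)

section Moments

variable (σ : Measure (EuclideanSpace ℝ (Fin n)))

def moment (i j : Fin n) : ℝ := ∫ x, x i ^ 2 * x j ^ 2 ∂σ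

def momentFunctional : symSub n →ₗ[ℝ] ℝ where
  toFun a := ∑ i, ∑ j, a.1 i j * moment σ i j
  map_add' a b := by simp only [Submodule.coe_add, Pi.add_apply, add_mul, sum_add_distrib]
  map_smul' t a := by
    simp only [Submodule.coe_smul, Pi.smul_apply, smul_eq_mul, mul_sum, mul_assoc,
      RingHom.id_apply]

lemma momentFunctional_apply (a : symSub n) :
    momentFunctional σ a = ∑ i, ∑ j, a.1 i j * moment σ i j := rfl

variable {σ}

lemma integrable_sq_mul_sq [IsFiniteMeasure σ] (hσ : ∀ᵐ x ∂σ, x ∈ Metric.sphere 0 1) (i j : Fin n) :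
    Integrable (fun x : EuclideanSpace ℝ (Fin n) => x i ^ 2 * x j ^ 2) σ :=
  integrable_of_ae_mem_sphere hσ (by fun_prop)

lemma integral_qfun [IsFiniteMeasure σ] (hσ : ∀ᵐ x ∂σ, x ∈ Metric.sphere 0 1) (a : symSub n) :
    ∫ x, qfun a x ∂σ = momentFunctional σ a := by
  simp only [qfun, momentFunctional_apply, moment, mul_assoc]
  rw [integral_finsetSum _ fun i _ => integrable_finsetSum _ fun j _ =>
    (integrable_sq_mul_sq hσ i j).const_mul _]
  refine sum_congr rfl fun i _ => ?_
  rw [integral_finsetSum _ fun j _ => (integrable_sq_mul_sq hσ i j).const_mul _]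
  exact sum_congr rfl fun j _ => integral_const_mul _ _

lemma momentFunctional_rQ [IsProbabilityMeasure σ] (hσ : ∀ᵐ x ∂σ, x ∈ Metric.sphere 0 1) :
    momentFunctional σ (rQ n) = 1 := by
  have hr : ∀ᵐ x ∂σ, qfun (rQ n) x = 1 := by
    filter_upwards [hσ] with x hx
    rw [qfun_rQ, mem_sphere_zero_iff_norm.1 hx, one_pow]
  rw [← integral_qfun hσ, integral_congr_ae hr, integral_const, probReal_univ, one_smul]

lemma moment_add_moment_of_map_eq [IsFiniteMeasure σ] (hσ : ∀ᵐ x ∂σ, x ∈ Metric.sphere 0 1)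
    {i j : Fin n} (hij : i ≠ j) (hinv : Measure.map (hadamardIsometry hij) σ = σ) :
    moment σ i i + moment σ j j = 6 * moment σ i j := by
  have hpt : ∀ x : EuclideanSpace ℝ (Fin n),
      hadamardIsometry hij x i ^ 2 * hadamardIsometry hij x j ^ 2 =
        (x i ^ 2 * x i ^ 2 - 2 * (x i ^ 2 * x j ^ 2) + x j ^ 2 * x j ^ 2) / 4 := fun x => by
    have h2 : √2 ^ 2 = 2 := Real.sq_sqrt zero_le_two
    rw [hadamardIsometry_apply_left, hadamardIsometry_apply_right, div_pow, div_pow, h2]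
    ring
  have hrot : moment σ i j =
      ∫ x, hadamardIsometry hij x i ^ 2 * hadamardIsometry hij x j ^ 2 ∂σ := by
    conv_lhs => rw [moment, ← hinv]
    exact integral_map (hadamardIsometry hij).continuous.aemeasurable (by fun_prop)
  have hint := integrable_sq_mul_sq hσ
  simp only [hpt, integral_div] at hrot
  have hsub : Integrable (fun x : EuclideanSpace ℝ (Fin n) =>
      x i ^ 2 * x i ^ 2 - 2 * (x i ^ 2 * x j ^ 2)) σ := (hint i i).sub ((hint i j).const_mul 2)
  rw [integral_add hsub (hint j j),
    integral_sub (hint i i) ((hint i j).const_mul 2), integral_const_mul] at hrot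
  simp only [moment] at hrot ⊢
  linarith

lemma moment_add_moment_le [IsFiniteMeasure σ] (hσ : ∀ᵐ x ∂σ, x ∈ Metric.sphere 0 1)
    (hinv : ∀ O : EuclideanSpace ℝ (Fin n) ≃ₗᵢ[ℝ] EuclideanSpace ℝ (Fin n),
      Measure.map O σ = σ) (i j : Fin n) :
    moment σ i i + moment σ j j ≤ 6 * moment σ i j := by
  rcases eq_or_ne i j with rfl | hij
  · have : 0 ≤ moment σ i i := integral_nonneg fun x => by positivity
    linarith
  · exact (moment_add_moment_of_map_eq hσ hij (hinv _)).le

lemma momentFunctional_rowSumDiag_le [IsFiniteMeasure σ] (hσ : ∀ᵐ x ∂σ, x ∈ Metric.sphere 0 1)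
    (hinv : ∀ O : EuclideanSpace ℝ (Fin n) ≃ₗᵢ[ℝ] EuclideanSpace ℝ (Fin n),
      Measure.map O σ = σ) {a : symSub n} (ha : a ∈ NNQ n) :
    momentFunctional σ (rowSumDiag a) ≤ 3 * momentFunctional σ a := by
  have hdiag : momentFunctional σ (rowSumDiag a) = ∑ i, (∑ j, a.1 i j) * moment σ i i := by
    simp [momentFunctional_apply, rowSumDiag, diagSym, ite_mul]
  rw [hdiag, momentFunctional_apply]
  exact sum_rowSum_mul_diag_le a.2 ha (moment_add_moment_le hσ hinv)

end Moments

end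

theorem stmt13_general (n : ℕ)
    (σ : Measure (EuclideanSpace ℝ (Fin n)))
    (hσprob : IsProbabilityMeasure σ)
    (hσsphere : σ (Metric.sphere (0 : EuclideanSpace ℝ (Fin n)) 1) = 1)
    (hσinv : ∀ O : EuclideanSpace ℝ (Fin n) ≃ₗᵢ[ℝ] EuclideanSpace ℝ (Fin n),
      Measure.map (⇑O) σ = σ) :
    sect σ (CPQ n) ⊆ sect σ (NNQ n) ∧
    sect σ (NNQ n) ⊆
      {h : symSub n | ∃ a ∈ sect σ (CPQ n), ∃ b ∈ sect σ (CPQ n),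
        h = (4:ℝ) • (a - b)} := by
  have hσ : ∀ᵐ x ∂σ, x ∈ Metric.sphere 0 1 :=
    (mem_ae_iff_prob_eq_one Metric.isClosed_sphere.measurableSet).2 hσsphere
  refine ⟨fun h ⟨h₀, hh⟩ => ⟨h₀, CPQ_subset_NNQ hh⟩, ?_⟩
  rintro h ⟨h₀, hh⟩
  rw [integral_qfun hσ] at h₀
  set m := h + rQ n
  set D := rowSumDiag m
  set X := momentFunctional σ D
  have hm : momentFunctional σ m = 1 := by simp [m, h₀, momentFunctional_rQ hσ]
  have hX : X ≤ 3 := by linarith [momentFunctional_rowSumDiag_le hσ hσinv hh]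
  have hD : D ∈ cpCone n := diagSym_mem_cpCone fun i => sum_nonneg fun j _ => hh i j
  refine ⟨(1/4 : ℝ) • (m + D) - ((1 + X) / 4) • rQ n, ⟨?_, ?_⟩,
    (1/4 : ℝ) • D - (X / 4) • rQ n, ⟨?_, ?_⟩, ?_⟩
  · rw [integral_qfun hσ]
    simp only [one_div, smul_add, map_sub, map_add, map_smul, hm, smul_eq_mul, mul_one,
      momentFunctional_rQ hσ]
    ring
  · rw [show _ + rQ n = (1/4 : ℝ) • (m + D) + ((3 - X) / 4) • rQ n by module]
    exact add_mem ((cpCone n).smul_mem (by norm_num) (add_rowSumDiag_mem_cpCone hh))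
      ((cpCone n).smul_mem (by linarith) rQ_mem_cpCone)
  · rw [integral_qfun hσ]
    simp only [one_div, map_sub, map_smul, smul_eq_mul, momentFunctional_rQ hσ, mul_one]
    ring
  · rw [show _ + rQ n = (1/4 : ℝ) • D + ((4 - X) / 4) • rQ n by module]
    exact add_mem ((cpCone n).smul_mem (by norm_num) hD)
      ((cpCone n).smul_mem (by linarith) rQ_mem_cpCone)
  · simp only [m]
    module

/-- `CP_Q~ ⊆ NN_Q~ ⊆ 4·(CP_Q~ − CP_Q~)`. -/
theorem stmt13 (n : ℕ) (hn : 1 ≤ n)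
    (σ : Measure (EuclideanSpace ℝ (Fin n)))
    (hσprob : IsProbabilityMeasure σ)
    (hσsphere : σ (Metric.sphere (0 : EuclideanSpace ℝ (Fin n)) 1) = 1)
    (hσinv : ∀ O : EuclideanSpace ℝ (Fin n) ≃ₗᵢ[ℝ] EuclideanSpace ℝ (Fin n),
      Measure.map (⇑O) σ = σ) :
    sect σ (CPQ n) ⊆ sect σ (NNQ n) ∧
    sect σ (NNQ n) ⊆
      {h : symSub n | ∃ a ∈ sect σ (CPQ n), ∃ b ∈ sect σ (CPQ n),
        h = (4:ℝ) • (a - b)} :=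
  stmt13_general n σ hσprob hσsphere hσinv
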